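/- Let (a_ξ)_{ξ∈Λ_n} be standard complex Gaussians, independent except for a_{-ξ} = conj(a_ξ), with n not a perfect square, and let Λ_n⁺ = {ξ ∈ Λ_n : ξ₂ > 0}, so #Λ_n⁺ = N_n/2. Then ∫_{𝕋²} H_4(T_n(x)) dx = (6/N_n)·( (N_n/2)^{-1/2} Σ_{ξ∈Λ_n⁺} (|a_ξ|² − 1) )² − (3/N_n²) Σ_{ξ∈Λ_n} |a_ξ|⁴, where T_n(x) = N_n^{-1/2} Σ_{ξ∈Λ_n} a_ξ e^{2πi⟨ξ,x⟩} and H_4(t) = t⁴ − 6t² + 3. -/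

import Mathlib

/-!
Expanding `T²` and `T⁴` in the characters `e_ξ(x) = e^{2πi⟨ξ,x⟩}` and integrating over the
torus, orthogonality leaves `∫ T² = N⁻¹ Σ_ξ a_ξ a_{-ξ}` and
`∫ T⁴ = N⁻² Σ a_{ξ₁} a_{ξ₂} a_{ξ₃} a_{ξ₄}` over the quadruples of `Λ_n` with `ξ₁ + ξ₂ + ξ₃ + ξ₄ = 0`. Zygmund's trick: for such a quadruple
on a circle the vectors `ξ₁ + ξ₂`, `ξ₁ + ξ₃`, `ξ₁ + ξ₄` are pairwise orthogonal in the plane, so one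
of them vanishes and the quadruple cancels in pairs. Counting the three pairings by
inclusion–exclusion gives `∫ T⁴ = 3 (N⁻¹ Σ |a_ξ|²)² - 3 N⁻² Σ |a_ξ|⁴`, and `H₄ = t⁴ - 6t² + 3`
completes the square. Since `n` is not a square, no point of `Λ_n` lies on the axis `ξ₂ = 0`, so
`ξ ↦ -ξ` exchanges `Λ_n⁺` with its complement; this halves both `N_n` and `Σ_Λ (|a_ξ|² - 1)`.
-/

open MeasureTheory
open scoped BigOperators
open Complex

open Finset

section ZeroSums

variable {G R : Type*} [AddCommGroup G] [DecidableEq G] [CommRing R]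

theorem sum_sum_ite_add_eq_zero {Λ : Finset G} (hneg : ∀ ξ ∈ Λ, -ξ ∈ Λ) (b : G → R) :
    ∑ ξ ∈ Λ, ∑ η ∈ Λ, (if ξ + η = 0 then b ξ * b η else 0) = ∑ ξ ∈ Λ, b ξ * b (-ξ) := by
  refine sum_congr rfl fun ξ hξ => ?_
  simp [add_eq_zero_iff_eq_neg', hneg ξ hξ]

def ZeroSumsCancelInPairs (Λ : Finset G) : Prop :=
  ∀ ξ₁ ∈ Λ, ∀ ξ₂ ∈ Λ, ∀ ξ₃ ∈ Λ, ∀ ξ₄ ∈ Λ, ξ₁ + ξ₂ + ξ₃ + ξ₄ = 0 →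
    (ξ₂ = -ξ₁ ∧ ξ₄ = -ξ₃) ∨ (ξ₃ = -ξ₁ ∧ ξ₄ = -ξ₂) ∨ (ξ₄ = -ξ₁ ∧ ξ₃ = -ξ₂)

/-- Inclusion–exclusion over the three pairings; all three hold at once only if `ξ₁ = -ξ₁`. -/
theorem ZeroSumsCancelInPairs.ite_eq_inclusion_exclusion {Λ : Finset G}
    (hΛ : ZeroSumsCancelInPairs Λ) {ξ₁ ξ₂ ξ₃ ξ₄ : G} (h₁ : ξ₁ ∈ Λ) (h₂ : ξ₂ ∈ Λ) (h₃ : ξ₃ ∈ Λ)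
    (h₄ : ξ₄ ∈ Λ) (h₁₁ : ξ₁ + ξ₁ ≠ 0) {M : Type*} [AddCommGroup M] (x : M) :
    (if ξ₁ + ξ₂ + ξ₃ + ξ₄ = 0 then x else 0) =
      (if ξ₂ = -ξ₁ ∧ ξ₄ = -ξ₃ then x else 0) + (if ξ₃ = -ξ₁ ∧ ξ₄ = -ξ₂ then x else 0) +
      (if ξ₄ = -ξ₁ ∧ ξ₃ = -ξ₂ then x else 0) -
      (if ξ₂ = -ξ₁ ∧ ξ₃ = -ξ₁ ∧ ξ₄ = ξ₁ then x else 0) -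
      (if ξ₂ = -ξ₁ ∧ ξ₃ = ξ₁ ∧ ξ₄ = -ξ₁ then x else 0) -
      (if ξ₂ = ξ₁ ∧ ξ₃ = -ξ₁ ∧ ξ₄ = -ξ₁ then x else 0) := by
  have hiff : ξ₁ + ξ₂ + ξ₃ + ξ₄ = 0 ↔
      (ξ₂ = -ξ₁ ∧ ξ₄ = -ξ₃) ∨ (ξ₃ = -ξ₁ ∧ ξ₄ = -ξ₂) ∨ (ξ₄ = -ξ₁ ∧ ξ₃ = -ξ₂) := by
    refine ⟨hΛ ξ₁ h₁ ξ₂ h₂ ξ₃ h₃ ξ₄ h₄, ?_⟩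
    rintro (⟨rfl, rfl⟩ | ⟨rfl, rfl⟩ | ⟨rfl, rfl⟩) <;> abel
  have : ξ₁ ≠ -ξ₁ := fun h => h₁₁ (eq_neg_iff_add_eq_zero.mp h)
  rw [if_congr hiff rfl rfl]
  split_ifs <;> grind

theorem ZeroSumsCancelInPairs.sum_zero_sum_quadruples {Λ : Finset G}
    (hΛ : ZeroSumsCancelInPairs Λ) (hneg : ∀ ξ ∈ Λ, -ξ ∈ Λ) (h2 : ∀ ξ ∈ Λ, ξ + ξ ≠ 0)
    (b : G → R) :
    ∑ ξ₁ ∈ Λ, ∑ ξ₂ ∈ Λ, ∑ ξ₃ ∈ Λ, ∑ ξ₄ ∈ Λ,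
      (if ξ₁ + ξ₂ + ξ₃ + ξ₄ = 0 then b ξ₁ * b ξ₂ * b ξ₃ * b ξ₄ else 0) =
    3 * (∑ ξ ∈ Λ, b ξ * b (-ξ)) ^ 2 - 3 * ∑ ξ ∈ Λ, (b ξ * b (-ξ)) ^ 2 := by
  rw [sum_congr rfl fun ξ₁ h₁ => sum_congr rfl fun ξ₂ h₂ => sum_congr rfl fun ξ₃ h₃ =>
    sum_congr rfl fun ξ₄ h₄ => hΛ.ite_eq_inclusion_exclusion h₁ h₂ h₃ h₄ (h2 ξ₁ h₁) _]
  simp only [sum_add_distrib, sum_sub_distrib]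
  simp (config := { contextual := true }) only [ite_and, sum_ite_irrel, sum_ite_eq', hneg,
    if_true, sum_const_zero, sq, sum_mul_sum]
  ring_nf

end ZeroSums

/-- The Gram determinant of three plane vectors vanishes; when they are pairwise orthogonal it is
the product of their squared lengths. -/
theorem eq_zero_or_eq_zero_or_eq_zero_of_pairwise_orthogonal {R : Type*} [CommRing R]
    [LinearOrder R] [IsStrictOrderedRing R] {u v w : R × R}
    (huv : u.1 * v.1 + u.2 * v.2 = 0) (huw : u.1 * w.1 + u.2 * w.2 = 0)
    (hvw : v.1 * w.1 + v.2 * w.2 = 0) : u = 0 ∨ v = 0 ∨ w = 0 := by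
  have gram :
      (u.1 * u.1 + u.2 * u.2) * (v.1 * v.1 + v.2 * v.2) * (w.1 * w.1 + w.2 * w.2) = 0 := by
    linear_combination (u.1 * u.1 + u.2 * u.2) * (v.1 * w.1 + v.2 * w.2) * hvw
      + (v.1 * v.1 + v.2 * v.2) * (u.1 * w.1 + u.2 * w.2) * huw
      + (w.1 * w.1 + w.2 * w.2) * (u.1 * v.1 + u.2 * v.2) * huv
      - 2 * (v.1 * w.1 + v.2 * w.2) * (u.1 * w.1 + u.2 * w.2) * huv
  simp only [mul_eq_zero, mul_self_add_mul_self_eq_zero] at gram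
  simp only [Prod.ext_iff, Prod.fst_zero, Prod.snd_zero]
  tauto

theorem orthogonal_add_add_of_add_add_add_eq_zero {n : ℤ} {ξ₁ ξ₂ ξ₃ ξ₄ : ℤ × ℤ}
    (h₁ : ξ₁.1 ^ 2 + ξ₁.2 ^ 2 = n) (h₂ : ξ₂.1 ^ 2 + ξ₂.2 ^ 2 = n)
    (h₃ : ξ₃.1 ^ 2 + ξ₃.2 ^ 2 = n) (h₄ : ξ₄.1 ^ 2 + ξ₄.2 ^ 2 = n)
    (hsum : ξ₁ + ξ₂ + ξ₃ + ξ₄ = 0) :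
    (ξ₁ + ξ₂).1 * (ξ₁ + ξ₃).1 + (ξ₁ + ξ₂).2 * (ξ₁ + ξ₃).2 = 0 := by
  obtain rfl : ξ₄ = -(ξ₁ + ξ₂ + ξ₃) := by linear_combination hsum
  simp only [Prod.fst_neg, Prod.snd_neg, Prod.fst_add, Prod.snd_add] at h₄ ⊢
  linarith

theorem zeroSumsCancelInPairs_of_forall_mem_circle {Λ : Finset (ℤ × ℤ)} {n : ℤ}
    (hΛ : ∀ ξ ∈ Λ, ξ.1 ^ 2 + ξ.2 ^ 2 = n) : ZeroSumsCancelInPairs Λ := by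
  intro ξ₁ h₁ ξ₂ h₂ ξ₃ h₃ ξ₄ h₄ hsum
  have n₁ := hΛ ξ₁ h₁
  have n₂ := hΛ ξ₂ h₂
  have n₃ := hΛ ξ₃ h₃
  have n₄ := hΛ ξ₄ h₄
  rcases eq_zero_or_eq_zero_or_eq_zero_of_pairwise_orthogonal
    (orthogonal_add_add_of_add_add_add_eq_zero n₁ n₂ n₃ n₄ hsum)
    (orthogonal_add_add_of_add_add_add_eq_zero n₁ n₂ n₄ n₃ (by linear_combination hsum))
    (orthogonal_add_add_of_add_add_add_eq_zero n₁ n₃ n₄ n₂ (by linear_combination hsum))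
    with h | h | h
  · exact Or.inl ⟨by linear_combination h, by linear_combination hsum - h⟩
  · exact Or.inr (Or.inl ⟨by linear_combination h, by linear_combination hsum - h⟩)
  · exact Or.inr (Or.inr ⟨by linear_combination h, by linear_combination hsum - h⟩)

local notation "unitSquare" => Set.Icc ((0 : ℝ), (0 : ℝ)) ((1 : ℝ), (1 : ℝ))

noncomputable def planeWave (ξ : ℤ × ℤ) (x : ℝ × ℝ) : ℂ :=
  exp (2 * Real.pi * I * ((ξ.1 : ℂ) * (x.1 : ℂ) + (ξ.2 : ℂ) * (x.2 : ℂ)))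

theorem continuous_planeWave (ξ : ℤ × ℤ) : Continuous (planeWave ξ) := by
  unfold planeWave
  fun_prop

theorem planeWave_add (ξ η : ℤ × ℤ) (x : ℝ × ℝ) :
    planeWave (ξ + η) x = planeWave ξ x * planeWave η x := by
  simp only [planeWave, ← Complex.exp_add, Prod.fst_add, Prod.snd_add, Int.cast_add]
  ring_nf

theorem setIntegral_Icc_exp_two_pi_I_int_mul (k : ℤ) :
    ∫ t in Set.Icc (0 : ℝ) 1, exp (2 * Real.pi * I * k * t) = if k = 0 then 1 else 0 := by
  rw [integral_Icc_eq_integral_Ioc, ← intervalIntegral.integral_of_le zero_le_one]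
  split_ifs with hk
  · simp [hk]
  have hc : 2 * Real.pi * I * k ≠ 0 := by simp [Real.pi_ne_zero, hk, I_ne_zero]
  rw [integral_exp_mul_complex hc, ofReal_one, mul_one, ofReal_zero, mul_zero, Complex.exp_zero,
    show 2 * Real.pi * I * k = k * (2 * Real.pi * I) by ring, exp_int_mul_two_pi_mul_I, sub_self,
    zero_div]

theorem setIntegral_unitSquare_planeWave (ξ : ℤ × ℤ) :
    ∫ x in unitSquare, planeWave ξ x = if ξ = 0 then 1 else 0 := by
  have hsplit (x : ℝ × ℝ) : planeWave ξ x =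
      exp (2 * Real.pi * I * ξ.1 * x.1) * exp (2 * Real.pi * I * ξ.2 * x.2) := by
    rw [planeWave, ← Complex.exp_add]
    ring_nf
  simp only [hsplit, Set.Icc_prod_eq, Measure.volume_eq_prod, ← Measure.prod_restrict]
  rw [integral_prod_mul (fun t : ℝ => exp (2 * Real.pi * I * ξ.1 * t))
    (fun t : ℝ => exp (2 * Real.pi * I * ξ.2 * t)),
    setIntegral_Icc_exp_two_pi_I_int_mul, setIntegral_Icc_exp_two_pi_I_int_mul]
  simp [Prod.ext_iff, ← ite_and, and_comm]

theorem setIntegral_unitSquare_sum_mul_planeWave {ι : Type*} (s : Finset ι) (c : ι → ℂ)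
    (φ : ι → ℤ × ℤ) :
    ∫ x in unitSquare, ∑ i ∈ s, c i * planeWave (φ i) x =
      ∑ i ∈ s, if φ i = 0 then c i else 0 := by
  rw [integral_finsetSum (f := fun i x => c i * planeWave (φ i) x) s fun i _ =>
    (continuous_const.mul (continuous_planeWave (φ i))).integrableOn_Icc]
  simp only [integral_const_mul, setIntegral_unitSquare_planeWave, mul_ite, mul_one, mul_zero]

theorem sq_sum_mul_planeWave {ι : Type*} (s : Finset ι) (c : ι → ℂ) (φ : ι → ℤ × ℤ)
    (x : ℝ × ℝ) :
    (∑ i ∈ s, c i * planeWave (φ i) x) ^ 2 =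
      ∑ p ∈ s ×ˢ s, c p.1 * c p.2 * planeWave (φ p.1 + φ p.2) x := by
  rw [sq, sum_mul_sum, sum_product]
  refine sum_congr rfl fun i _ => sum_congr rfl fun j _ => ?_
  rw [planeWave_add]
  ring

theorem setIntegral_unitSquare_sq_sum_mul_planeWave (Λ : Finset (ℤ × ℤ)) (b : ℤ × ℤ → ℂ) :
    ∫ x in unitSquare, (∑ ξ ∈ Λ, b ξ * planeWave ξ x) ^ 2 =
      ∑ ξ₁ ∈ Λ, ∑ ξ₂ ∈ Λ, if ξ₁ + ξ₂ = 0 then b ξ₁ * b ξ₂ else 0 := by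
  have h := sq_sum_mul_planeWave Λ b id
  simp only [id] at h
  simp_rw [h]
  rw [setIntegral_unitSquare_sum_mul_planeWave, sum_product]

theorem setIntegral_unitSquare_pow_four_sum_mul_planeWave (Λ : Finset (ℤ × ℤ))
    (b : ℤ × ℤ → ℂ) :
    ∫ x in unitSquare, (∑ ξ ∈ Λ, b ξ * planeWave ξ x) ^ 4 =
      ∑ ξ₁ ∈ Λ, ∑ ξ₂ ∈ Λ, ∑ ξ₃ ∈ Λ, ∑ ξ₄ ∈ Λ,
        if ξ₁ + ξ₂ + ξ₃ + ξ₄ = 0 then b ξ₁ * b ξ₂ * b ξ₃ * b ξ₄ else 0 := by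
  have h := sq_sum_mul_planeWave Λ b id
  simp only [id] at h
  simp_rw [show ∀ z : ℂ, z ^ 4 = (z ^ 2) ^ 2 by intro z; ring, h,
    sq_sum_mul_planeWave (Λ ×ˢ Λ) (fun p => b p.1 * b p.2) (fun p => p.1 + p.2)]
  rw [setIntegral_unitSquare_sum_mul_planeWave]
  simp only [sum_product, ← add_assoc, ← mul_assoc]

theorem ofReal_setIntegral_unitSquare_hermite_four {T : ℝ × ℝ → ℝ}
    (hT : Continuous fun x => (T x : ℂ)) :
    ((∫ x in unitSquare, (T x ^ 4 - 6 * T x ^ 2 + 3) : ℝ) : ℂ) =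
      (∫ x in unitSquare, (T x : ℂ) ^ 4) - 6 * (∫ x in unitSquare, (T x : ℂ) ^ 2) + 3 := by
  have hvol : volume.real unitSquare = 1 := by
    rw [measureReal_def, Set.Icc_prod_eq, Measure.volume_eq_prod, Measure.prod_prod,
      Real.volume_Icc]
    norm_num
  have hi4 : IntegrableOn (fun x => (T x : ℂ) ^ 4) unitSquare := (hT.pow 4).integrableOn_Icc
  have hi2 : IntegrableOn (fun x => 6 * (T x : ℂ) ^ 2) unitSquare :=
    (continuous_const.mul (hT.pow 2)).integrableOn_Icc
  have hi42 : IntegrableOn (fun x => (T x : ℂ) ^ 4 - 6 * (T x : ℂ) ^ 2) unitSquare := hi4.sub hi2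
  refine integral_ofReal.symm.trans ?_
  change ∫ x in unitSquare, ((T x ^ 4 - 6 * T x ^ 2 + 3 : ℝ) : ℂ) = _
  push_cast
  rw [integral_add hi42 continuous_const.integrableOn_Icc, integral_sub hi4 hi2,
    integral_const_mul, setIntegral_const, hvol, one_smul]

theorem setIntegral_unitSquare_hermite_four {Λ : Finset (ℤ × ℤ)}
    (hΛ : ZeroSumsCancelInPairs Λ) (hneg : ∀ ξ ∈ Λ, -ξ ∈ Λ) (h0 : (0 : ℤ × ℤ) ∉ Λ)
    (b : ℤ × ℤ → ℂ) (hb : ∀ ξ ∈ Λ, b (-ξ) = starRingEnd ℂ (b ξ)) (T : ℝ × ℝ → ℝ)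
    (hT : ∀ x, (T x : ℂ) = ∑ ξ ∈ Λ, b ξ * planeWave ξ x) :
    ∫ x in unitSquare, (T x ^ 4 - 6 * T x ^ 2 + 3) =
      3 * (∑ ξ ∈ Λ, ‖b ξ‖ ^ 2 - 1) ^ 2 - 3 * ∑ ξ ∈ Λ, ‖b ξ‖ ^ 4 := by
  have h2 : ∀ ξ ∈ Λ, ξ + ξ ≠ 0 := fun ξ hξ h => by
    rw [← two_nsmul, smul_eq_zero, or_iff_right two_ne_zero] at h
    exact h0 (h ▸ hξ)
  have hw : ∀ ξ ∈ Λ, b ξ * b (-ξ) = ((‖b ξ‖ ^ 2 : ℝ) : ℂ) := fun ξ hξ => by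
    rw [hb ξ hξ, mul_conj, normSq_eq_norm_sq]
  have hw2 : ∑ ξ ∈ Λ, (b ξ * b (-ξ)) ^ 2 = ∑ ξ ∈ Λ, ((‖b ξ‖ ^ 4 : ℝ) : ℂ) :=
    sum_congr rfl fun ξ hξ => by rw [hw ξ hξ]; push_cast; ring
  have hTc : Continuous fun x => (T x : ℂ) := by
    simp_rw [hT]
    exact continuous_finsetSum _ fun ξ _ => continuous_const.mul (continuous_planeWave ξ)
  apply ofReal_injective
  rw [ofReal_setIntegral_unitSquare_hermite_four hTc]
  simp_rw [hT]
  rw [setIntegral_unitSquare_pow_four_sum_mul_planeWave,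
    setIntegral_unitSquare_sq_sum_mul_planeWave, hΛ.sum_zero_sum_quadruples hneg h2,
    sum_sum_ite_add_eq_zero hneg, hw2, sum_congr rfl hw]
  push_cast
  ring

theorem snd_ne_zero_of_sq_add_sq_eq {n : ℕ} (hn : ¬∃ m : ℕ, m ^ 2 = n) {ξ : ℤ × ℤ}
    (hξ : ξ.1 ^ 2 + ξ.2 ^ 2 = n) : ξ.2 ≠ 0 := fun h =>
  hn ⟨ξ.1.natAbs, by zify; simpa [h] using hξ⟩

theorem two_nsmul_sum_filter_snd_pos {M : Type*} [AddCommMonoid M] {Λ : Finset (ℤ × ℤ)}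
    (hneg : ∀ ξ ∈ Λ, -ξ ∈ Λ) (hsnd : ∀ ξ ∈ Λ, ξ.2 ≠ 0) {f : ℤ × ℤ → M}
    (hf : ∀ ξ ∈ Λ, f (-ξ) = f ξ) :
    2 • ∑ ξ ∈ Λ.filter (fun ξ => 0 < ξ.2), f ξ = ∑ ξ ∈ Λ, f ξ := by
  rw [two_nsmul, ← sum_filter_add_sum_filter_not Λ (fun ξ => 0 < ξ.2)]
  congr 1
  refine sum_nbij' (fun ξ => -ξ) (fun ξ => -ξ) ?_ ?_ (by simp) (by simp)
    (fun ξ hξ => (hf ξ (mem_filter.mp hξ).1).symm)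
  · intro ξ hξ
    simp only [mem_filter, Prod.snd_neg] at hξ ⊢
    exact ⟨hneg ξ hξ.1, by omega⟩
  · intro ξ hξ
    simp only [mem_filter, Prod.snd_neg] at hξ ⊢
    exact ⟨hneg ξ hξ.1, by have := hsnd ξ hξ.1; omega⟩

theorem rpow_neg_one_div_two_sq {x : ℝ} (hx : 0 ≤ x) : (x ^ (-(1 : ℝ) / 2)) ^ 2 = x⁻¹ := by
  rw [← Real.rpow_natCast, ← Real.rpow_mul hx]
  norm_num [Real.rpow_neg_one]

theorem fourth_hermite_integral_arithmetic_random_wave_general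
    (n : ℕ) (hnotsq : ¬∃ m : ℕ, m ^ 2 = n)
    (Λ : Finset (ℤ × ℤ))
    (hΛ : ∀ ξ : ℤ × ℤ, ξ ∈ Λ ↔ ξ.1 ^ 2 + ξ.2 ^ 2 = (n : ℤ))
    (hne : Λ.Nonempty)
    (a : ℤ × ℤ → ℂ)
    (hconj : ∀ ξ, a (-ξ) = starRingEnd ℂ (a ξ))
    (T : ℝ × ℝ → ℝ)
    (hT : ∀ x, (T x : ℂ) = (1 / (Real.sqrt Λ.card : ℂ)) *
      ∑ ξ ∈ Λ, a ξ * Complex.exp (2 * Real.pi * Complex.I *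
        ((ξ.1 : ℂ) * (x.1 : ℂ) + (ξ.2 : ℂ) * (x.2 : ℂ)))) :
    (Λ.filter (fun ξ => 0 < ξ.2)).card = Λ.card / 2 ∧
    ∫ x in Set.Icc ((0 : ℝ), (0 : ℝ)) ((1 : ℝ), (1 : ℝ)),
        ((T x) ^ 4 - 6 * (T x) ^ 2 + 3)
      = (6 / (Λ.card : ℝ)) *
          (((Λ.card : ℝ) / 2) ^ (-(1 : ℝ) / 2) *
            ∑ ξ ∈ Λ.filter (fun ξ => 0 < ξ.2), (‖a ξ‖ ^ 2 - 1)) ^ 2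
        - (3 / (Λ.card : ℝ) ^ 2) * ∑ ξ ∈ Λ, ‖a ξ‖ ^ 4 := by
  have hneg : ∀ ξ ∈ Λ, -ξ ∈ Λ := fun ξ hξ => by simpa [hΛ] using hξ
  have hsnd : ∀ ξ ∈ Λ, ξ.2 ≠ 0 := fun ξ hξ => snd_ne_zero_of_sq_add_sq_eq hnotsq ((hΛ ξ).1 hξ)
  have hcard : 2 * #(Λ.filter (fun ξ => 0 < ξ.2)) = #Λ := by
    simpa only [sum_const, nsmul_eq_mul, Nat.cast_id, mul_one] using
      two_nsmul_sum_filter_snd_pos hneg hsnd (f := fun _ => (1 : ℕ)) fun _ _ => rfl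
  refine ⟨by omega, ?_⟩
  have hplus : 2 * ∑ ξ ∈ Λ.filter (fun ξ => 0 < ξ.2), (‖a ξ‖ ^ 2 - 1) =
      ∑ ξ ∈ Λ, ‖a ξ‖ ^ 2 - #Λ := by
    have h := two_nsmul_sum_filter_snd_pos hneg hsnd (f := fun ξ => ‖a ξ‖ ^ 2 - 1)
      fun ξ _ => by rw [hconj, norm_conj]
    rwa [sum_sub_distrib (s := Λ), sum_const, nsmul_one, nsmul_eq_mul, Nat.cast_ofNat] at h
  have hN : (0 : ℝ) < #Λ := by exact_mod_cast hne.card_pos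
  set b : ℤ × ℤ → ℂ := fun ξ => a ξ / (Real.sqrt #Λ : ℂ)
  have hb : ∀ ξ ∈ Λ, b (-ξ) = starRingEnd ℂ (b ξ) := fun ξ _ => by
    simp only [b, hconj, map_div₀, conj_ofReal]
  have hTb (x : ℝ × ℝ) : (T x : ℂ) = ∑ ξ ∈ Λ, b ξ * planeWave ξ x := by
    rw [hT x, mul_sum]
    exact sum_congr rfl fun ξ _ => by simp only [b, planeWave]; ring
  have hb2 (ξ : ℤ × ℤ) : ‖b ξ‖ ^ 2 = ‖a ξ‖ ^ 2 / #Λ := by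
    rw [norm_div, norm_real, Real.norm_of_nonneg (Real.sqrt_nonneg _), div_pow,
      Real.sq_sqrt hN.le]
  have hb4 (ξ : ℤ × ℤ) : ‖b ξ‖ ^ 4 = ‖a ξ‖ ^ 4 / (#Λ : ℝ) ^ 2 := by
    rw [show 4 = 2 * 2 from rfl, pow_mul, hb2, pow_mul, div_pow]
  rw [setIntegral_unitSquare_hermite_four (zeroSumsCancelInPairs_of_forall_mem_circle
    fun ξ => (hΛ ξ).1) hneg (fun h => hsnd 0 h rfl) b hb T hTb]
  simp only [hb2, hb4, ← sum_div]
  rw [mul_pow, rpow_neg_one_div_two_sq (by positivity)]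
  field_simp
  linear_combination (-3 * (∑ ξ ∈ Λ, ‖a ξ‖ ^ 2 - #Λ +
    2 * ∑ ξ ∈ Λ.filter (fun ξ => 0 < ξ.2), (‖a ξ‖ ^ 2 - 1))) * hplus

/-- for `n` not a perfect square, with
`Λ_n⁺ = {ξ ∈ Λ_n : ξ₂ > 0}` one has `#Λ_n⁺ = N_n/2`, and for the (real-valued)
arithmetic random wave `T_n` and `H₄(t) = t⁴ - 6t² + 3`,
`∫_{𝕋²} H₄(T_n) = (6/N_n)((N_n/2)^{-1/2} Σ_{ξ∈Λ_n⁺}(|a_ξ|²-1))²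
  - (3/N_n²) Σ_{ξ∈Λ_n} |a_ξ|⁴`.
The torus is realized as the unit square `[0,1]² ⊆ ℝ²`. -/
theorem fourth_hermite_integral_arithmetic_random_wave
    (n : ℕ) (hn : 1 ≤ n) (hnotsq : ¬∃ m : ℕ, m ^ 2 = n)
    (Λ : Finset (ℤ × ℤ))
    (hΛ : ∀ ξ : ℤ × ℤ, ξ ∈ Λ ↔ ξ.1 ^ 2 + ξ.2 ^ 2 = (n : ℤ))
    (hne : Λ.Nonempty)
    (a : ℤ × ℤ → ℂ)
    (hconj : ∀ ξ, a (-ξ) = starRingEnd ℂ (a ξ))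
    (T : ℝ × ℝ → ℝ)
    (hT : ∀ x, (T x : ℂ) = (1 / (Real.sqrt Λ.card : ℂ)) *
      ∑ ξ ∈ Λ, a ξ * Complex.exp (2 * Real.pi * Complex.I *
        ((ξ.1 : ℂ) * (x.1 : ℂ) + (ξ.2 : ℂ) * (x.2 : ℂ)))) :
    (Λ.filter (fun ξ => 0 < ξ.2)).card = Λ.card / 2 ∧
    ∫ x in Set.Icc ((0 : ℝ), (0 : ℝ)) ((1 : ℝ), (1 : ℝ)),
        ((T x) ^ 4 - 6 * (T x) ^ 2 + 3)
      = (6 / (Λ.card : ℝ)) *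
          (((Λ.card : ℝ) / 2) ^ (-(1 : ℝ) / 2) *
            ∑ ξ ∈ Λ.filter (fun ξ => 0 < ξ.2), (‖a ξ‖ ^ 2 - 1)) ^ 2
        - (3 / (Λ.card : ℝ) ^ 2) * ∑ ξ ∈ Λ, ‖a ξ‖ ^ 4 :=
  fourth_hermite_integral_arithmetic_random_wave_general n hnotsq Λ hΛ hne a hconj T hT
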